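/- Theorem (two solutions): Assume min_k p(k) > 0; assume one of the anti-coercivity hypotheses holds (e.g., there exist M ≥ 0, α > 0, q > 2 with F(k,u) ≥ α|u|^q for |u| > M and all k); and assume max_{k∈Z[1,N]} lim_{u→0} f(k,u)/u ≤ c < λ·min_k p(k). Then the boundary value problem Δⁿ(p(k-n)Δⁿx(k-n)) + (-1)^{n+1} f(k,x(k)) = 0, x(i) = 0 on Z[1-n,0] ∪ Z[N+1,N+n], has at least two distinct solutions. -/

import Mathlib

open Finset

/-- forward difference operator -/
def dd (x : ℤ → ℝ) : ℤ → ℝ := fun i => x (i + 1) - x i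

/-- extension of `v : Fin N → ℝ` to a function on `ℤ` supported on `Z[1,N]`
(thus vanishing on `Z[1-n,0] ∪ Z[N+1,N+n]`); this realizes the space `E`. -/
noncomputable def extendE (N : ℕ) (v : Fin N → ℝ) : ℤ → ℝ := fun i =>
  if h : 0 ≤ i - 1 ∧ (i - 1).toNat < N then v ⟨(i - 1).toNat, h.2⟩ else 0

/-- the norm of the space `E`: `‖x‖ = (∑_{k=1}^N x(k)²)^{1/2}` -/
noncomputable def normE (N : ℕ) (v : Fin N → ℝ) : ℝ :=
  Real.sqrt (∑ k ∈ Finset.Icc (1 : ℤ) (N : ℤ), (extendE N v k) ^ 2)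

/-- `F(k,s) = ∫₀ˢ f(k,t) dt` -/
noncomputable def Ffun (f : ℤ → ℝ → ℝ) (k : ℤ) (s : ℝ) : ℝ := ∫ t in (0 : ℝ)..s, f k t

/-- the action functional `J` -/
noncomputable def Jfun (n N : ℕ) (p : ℤ → ℝ) (F : ℤ → ℝ → ℝ) (v : Fin N → ℝ) : ℝ :=
  ∑ k ∈ Finset.Icc (1 - (n : ℤ)) (N : ℤ),
    ((1 / 2 : ℝ) * p k * (dd^[n] (extendE N v) k) ^ 2 - F k (extendE N v k))

/-- `v` solves the discrete BVP
`Δⁿ(p(k-n)Δⁿx(k-n)) + (-1)^{n+1} f(k,x(k)) = 0`, `k ∈ Z[1,N]`,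
with the Dirichlet boundary conditions built into `extendE`. -/
def Solves (n N : ℕ) (p : ℤ → ℝ) (f : ℤ → ℝ → ℝ) (v : Fin N → ℝ) : Prop :=
  ∀ k ∈ Finset.Icc (1 : ℤ) (N : ℤ),
    dd^[n] (fun j => p j * dd^[n] (extendE N v) j) (k - n)
      + (-1 : ℝ) ^ (n + 1) * f k (extendE N v k) = 0

/-- coercivity: `J(x) → +∞` as `‖x‖ → ∞` -/
def CoerciveE (N : ℕ) (J : (Fin N → ℝ) → ℝ) : Prop :=
  ∀ C : ℝ, ∃ R : ℝ, ∀ v : Fin N → ℝ, R ≤ normE N v → C ≤ J v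

/-- anti-coercivity: `J(x) → −∞` as `‖x‖ → ∞` -/
def AntiCoerciveE (N : ℕ) (J : (Fin N → ℝ) → ℝ) : Prop :=
  ∀ C : ℝ, ∃ R : ℝ, ∀ v : Fin N → ℝ, R ≤ normE N v → J v ≤ C

/-!
The quadratic part of `J` is bounded by `A‖v‖²`, while `F(k, ·)` grows faster than any
quadratic, so `J v ≤ C - ‖v‖²` and the continuous functional `J` attains a global maximum at
some `w`. Summation by parts shows that the partial derivatives of `J` are, up to the sign
`(-1)ⁿ`, the left-hand sides of the equation, so every local maximum solves the problem. On the
other hand the Poincaré-type inequality and `f(1,u) ≤ a u` near `0⁺` with `a < λ·p_min` give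
`J (t e₁) ≥ (λ p_min - a) t² / 2 > 0` for small `t > 0`, so `J w > 0 = J 0`: the maximiser `w`
and the trivial solution `0` are distinct.
-/

open Filter Topology

lemma dd_eq_fwdDiff : dd = fwdDiff 1 := rfl

lemma dd_iterate_add (n : ℕ) (x y : ℤ → ℝ) : dd^[n] (x + y) = dd^[n] x + dd^[n] y :=
  fwdDiff_iter_add 1 x y n

lemma dd_iterate_smul (n : ℕ) (a : ℝ) (x : ℤ → ℝ) : dd^[n] (a • x) = a • dd^[n] x :=
  fwdDiff_iter_const_smul 1 a x n

lemma dd_iterate_zero (n : ℕ) : dd^[n] (0 : ℤ → ℝ) = 0 :=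
  Function.iterate_fixed (funext fun _ => sub_self 0) n

lemma sum_mul_dd_iterate_single (g : ℤ → ℝ) (n : ℕ) (m : ℤ) {s : Finset ℤ}
    (hs : Icc (m - n) m ⊆ s) :
    ∑ k ∈ s, g k * dd^[n] (Pi.single m (1 : ℝ)) k = (-1) ^ n * dd^[n] g (m - n) := by
  simp only [dd_eq_fwdDiff, fwdDiff_iter_eq_sum_shift, mul_sum, zsmul_eq_mul, nsmul_eq_mul,
    mul_one]
  rw [sum_comm, ← sum_range_reflect _ (n + 1)]
  refine sum_congr rfl fun i hi => ?_
  have hin : i < n + 1 := mem_range.1 hi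
  rw [sum_eq_single_of_mem (m - n + i) (hs (mem_Icc.2 ⟨by omega, by omega⟩))]
  · rw [Nat.add_sub_cancel, Nat.sub_sub_self (by omega), Nat.choose_symm (by omega),
      Pi.single_apply, if_pos (by omega)]
    have hsign : ((-1 : ℝ) ^ n) * (-1) ^ (n - i) = (-1) ^ i := by
      rw [← pow_add, show n + (n - i) = i + 2 * (n - i) by omega, pow_add, pow_mul]
      norm_num
    push_cast
    rw [← hsign]
    ring
  · intro k _ hk
    rw [Pi.single_apply, if_neg (by omega)]
    ring

lemma extendE_add (N : ℕ) (v w : Fin N → ℝ) :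
    extendE N (v + w) = extendE N v + extendE N w := by
  funext i
  simp only [extendE, Pi.add_apply]
  split_ifs <;> simp

lemma extendE_smul (N : ℕ) (a : ℝ) (v : Fin N → ℝ) : extendE N (a • v) = a • extendE N v := by
  funext i
  simp only [extendE, Pi.smul_apply]
  split_ifs <;> simp

lemma extendE_zero (N : ℕ) : extendE N 0 = 0 := by
  simpa using extendE_smul N 0 0

lemma extendE_natCast_add_one (N : ℕ) (v : Fin N → ℝ) (j : Fin N) :
    extendE N v ((j : ℤ) + 1) = v j := by
  simp [extendE]

lemma extendE_eq_zero_of_notMem (N : ℕ) (v : Fin N → ℝ) {k : ℤ} (hk : k ∉ Icc (1 : ℤ) N) :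
    extendE N v k = 0 := by
  rw [mem_Icc] at hk
  simp only [extendE]
  rw [dif_neg]
  omega

lemma extendE_single (N : ℕ) (j : Fin N) (t : ℝ) :
    extendE N (Pi.single j t) = Pi.single ((j : ℤ) + 1) t := by
  funext k
  simp only [extendE, Pi.single_apply, Fin.ext_iff]
  split_ifs <;> first | rfl | omega

lemma continuous_extendE_apply (N : ℕ) (k : ℤ) :
    Continuous fun v : Fin N → ℝ => extendE N v k := by
  unfold extendE
  split_ifs <;> fun_prop

lemma norm_sq_le_sum_sq_extendE (N : ℕ) (v : Fin N → ℝ) {s : Finset ℤ}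
    (hs : Icc (1 : ℤ) N ⊆ s) : ‖v‖ ^ 2 ≤ ∑ k ∈ s, extendE N v k ^ 2 := by
  refine (Real.le_sqrt (norm_nonneg v) (sum_nonneg fun _ _ => sq_nonneg _)).1 ?_
  refine (pi_norm_le_iff_of_nonneg (Real.sqrt_nonneg _)).2 fun j => ?_
  rw [Real.norm_eq_abs, ← extendE_natCast_add_one N v j]
  exact Real.abs_le_sqrt (single_le_sum (fun k _ => sq_nonneg (extendE N v k))
    (hs (mem_Icc.2 ⟨by omega, by omega⟩)))

noncomputable def ddIterExtendE (n N : ℕ) (k : ℤ) : (Fin N → ℝ) →L[ℝ] ℝ :=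
  LinearMap.toContinuousLinearMap
    { toFun := fun v => dd^[n] (extendE N v) k
      map_add' := fun v w => by simp [extendE_add, dd_iterate_add]
      map_smul' := fun a v => by simp [extendE_smul, dd_iterate_smul] }

lemma ddIterExtendE_apply (n N : ℕ) (k : ℤ) (v : Fin N → ℝ) :
    ddIterExtendE n N k v = dd^[n] (extendE N v) k := rfl

lemma exists_sum_mul_sq_dd_iterate_le (n N : ℕ) (p : ℤ → ℝ) (s : Finset ℤ) :
    ∃ A, ∀ v : Fin N → ℝ, ∑ k ∈ s, 1 / 2 * p k * dd^[n] (extendE N v) k ^ 2 ≤ A * ‖v‖ ^ 2 := by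
  refine ⟨∑ k ∈ s, 1 / 2 * |p k| * ‖ddIterExtendE n N k‖ ^ 2, fun v => ?_⟩
  rw [sum_mul]
  refine sum_le_sum fun k _ => ?_
  rw [← ddIterExtendE_apply, ← sq_abs, ← Real.norm_eq_abs]
  calc 1 / 2 * p k * ‖ddIterExtendE n N k v‖ ^ 2
      ≤ 1 / 2 * |p k| * (‖ddIterExtendE n N k‖ * ‖v‖) ^ 2 := by
        gcongr
        · exact le_abs_self _
        · exact (ddIterExtendE n N k).le_opNorm v
    _ = 1 / 2 * |p k| * ‖ddIterExtendE n N k‖ ^ 2 * ‖v‖ ^ 2 := by ring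

lemma hasDerivAt_Ffun {f : ℤ → ℝ → ℝ} {k : ℤ} (hf : Continuous (f k)) (u : ℝ) :
    HasDerivAt (Ffun f k) (f k u) u :=
  intervalIntegral.integral_hasDerivAt_right (hf.intervalIntegrable 0 u)
    (hf.stronglyMeasurableAtFilter _ _) hf.continuousAt

lemma continuous_Ffun {f : ℤ → ℝ → ℝ} {k : ℤ} (hf : Continuous (f k)) : Continuous (Ffun f k) :=
  continuous_iff_continuousAt.2 fun u => (hasDerivAt_Ffun hf u).continuousAt

lemma Ffun_zero (f : ℤ → ℝ → ℝ) (k : ℤ) : Ffun f k 0 = 0 := by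
  simp [Ffun]

lemma exists_Ffun_le_mul_sq {f : ℤ → ℝ → ℝ} {k : ℤ} (hf : Continuous (f k)) (hf0 : f k 0 = 0)
    {L a : ℝ} (hlim : Tendsto (fun u => f k u / u) (𝓝[≠] 0) (𝓝 L)) (hLa : L < a) :
    ∃ t > 0, Ffun f k t ≤ a / 2 * t ^ 2 := by
  obtain ⟨t, ht0, ht⟩ := mem_nhdsGT_iff_exists_Ioc_subset.1
    ((hlim.mono_left (nhdsGT_le_nhdsNE 0)).eventually (gt_mem_nhds hLa))
  refine ⟨t, ht0, ?_⟩
  have hle : ∀ u ∈ Set.Icc 0 t, f k u ≤ a * u := by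
    rintro u ⟨hu0, hut⟩
    rcases hu0.eq_or_lt with rfl | hu0
    · simp [hf0]
    · exact (div_lt_iff₀ hu0).1 (ht ⟨hu0, hut⟩) |>.le
  calc Ffun f k t ≤ ∫ u in (0 : ℝ)..t, a * u :=
        intervalIntegral.integral_mono_on (le_of_lt ht0) (hf.intervalIntegrable _ _)
          ((continuous_const.mul continuous_id).intervalIntegrable _ _) hle
    _ = a / 2 * t ^ 2 := by
        rw [intervalIntegral.integral_const_mul, integral_id]
        ring

lemma eventually_mul_sq_sub_le {G : ℝ → ℝ} (hG : Continuous G) {M α q : ℝ} (hα : 0 < α)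
    (hq : 2 < q) (hGe : ∀ u, M < |u| → α * |u| ^ q ≤ G u) (K : ℝ) :
    ∀ᶠ C in atTop, ∀ u, K * u ^ 2 - C ≤ G u := by
  obtain ⟨R, hR⟩ := eventually_atTop.1
    ((tendsto_rpow_atTop (by linarith : 0 < q - 2)).eventually_ge_atTop (K / α))
  set R' := max (max R M) 1
  obtain ⟨C, hC⟩ := (isCompact_Icc (a := -R') (b := R')).bddAbove_image
    (f := fun u => K * u ^ 2 - G u) (by fun_prop)
  refine eventually_atTop.2 ⟨max C 0, fun C' hC' u => ?_⟩
  by_cases hu : |u| ≤ R'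
  · have := hC (Set.mem_image_of_mem _ (Set.mem_Icc.2 (abs_le.1 hu)))
    linarith [le_max_left C 0]
  · push Not at hu
    have hRu : R ≤ |u| ∧ M < |u| ∧ 0 < |u| := by
      refine ⟨?_, ?_, ?_⟩ <;> linarith [le_max_left R M, le_max_right R M,
        le_max_left (max R M) 1, le_max_right (max R M) 1]
    have hK : K ≤ α * |u| ^ (q - 2) := (div_le_iff₀' hα).1 (hR |u| hRu.1)
    calc K * u ^ 2 - C' ≤ α * |u| ^ (q - 2) * u ^ 2 := by
          nlinarith [le_max_right C 0, sq_nonneg u]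
      _ = α * |u| ^ q := by
          rw [Real.rpow_sub hRu.2.2, Real.rpow_two, sq_abs, mul_assoc,
            div_mul_cancel₀ _ (pow_ne_zero 2 (abs_pos.1 hRu.2.2))]
      _ ≤ G u := hGe u hRu.2.1

lemma Jfun_zero (n N : ℕ) (p : ℤ → ℝ) (f : ℤ → ℝ → ℝ) : Jfun n N p (Ffun f) 0 = 0 := by
  simp [Jfun, extendE_zero, dd_iterate_zero, Ffun_zero]

lemma continuous_Jfun (n N : ℕ) (p : ℤ → ℝ) {f : ℤ → ℝ → ℝ} (hf : ∀ k, Continuous (f k)) :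
    Continuous (Jfun n N p (Ffun f)) :=
  continuous_finsetSum _ fun k _ =>
    (continuous_const.mul ((ddIterExtendE n N k).continuous.pow 2)).sub
      ((continuous_Ffun (hf k)).comp (continuous_extendE_apply N k))

lemma hasDerivAt_Jfun_add_smul (n N : ℕ) (p : ℤ → ℝ) {f : ℤ → ℝ → ℝ}
    (hf : ∀ k, Continuous (f k)) (w e : Fin N → ℝ) :
    HasDerivAt (fun t : ℝ => Jfun n N p (Ffun f) (w + t • e))
      (∑ k ∈ Icc (1 - (n : ℤ)) N, (p k * dd^[n] (extendE N w) k * dd^[n] (extendE N e) k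
        - f k (extendE N w k) * extendE N e k)) 0 := by
  simp only [Jfun, extendE_add, extendE_smul, dd_iterate_add, dd_iterate_smul, Pi.add_apply,
    Pi.smul_apply, smul_eq_mul]
  have hline (a b : ℝ) : HasDerivAt (fun t : ℝ => a + t * b) b 0 := by
    simpa using ((hasDerivAt_id (0 : ℝ)).mul_const b).const_add a
  refine HasDerivAt.fun_sum fun k _ => HasDerivAt.sub ?_ ?_
  · refine (((hline _ _).fun_pow 2).const_mul (1 / 2 * p k)).congr_deriv ?_
    simp only [zero_mul, add_zero, Nat.cast_ofNat]
    ring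
  · exact (hasDerivAt_Ffun (hf k) _).comp_of_eq 0 (hline _ _) (by simp)

lemma solves_of_isLocalMax (n N : ℕ) (p : ℤ → ℝ) {f : ℤ → ℝ → ℝ}
    (hf : ∀ k, Continuous (f k)) {w : Fin N → ℝ} (hw : IsLocalMax (Jfun n N p (Ffun f)) w) :
    Solves n N p f w := by
  intro m hm
  rw [mem_Icc] at hm
  set j : Fin N := ⟨(m - 1).toNat, by omega⟩
  have hj : (j : ℤ) + 1 = m := by
    change ((m - 1).toNat : ℤ) + 1 = m
    omega
  have hline : IsLocalMax (Jfun n N p (Ffun f) ∘ fun t : ℝ => w + t • Pi.single j 1) 0 :=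
    IsLocalMax.comp_continuous (by rwa [zero_smul, add_zero]) (by fun_prop)
  have hcrit := hline.hasDerivAt_eq_zero (hasDerivAt_Jfun_add_smul n N p hf w (Pi.single j 1))
  have hsub : Icc (m - n) m ⊆ Icc (1 - (n : ℤ)) N := Icc_subset_Icc (by omega) (by omega)
  rw [extendE_single, hj, sum_sub_distrib,
    sum_mul_dd_iterate_single (fun k => p k * dd^[n] (extendE N w) k) n m hsub,
    sum_eq_single_of_mem m (hsub (mem_Icc.2 ⟨by omega, le_rfl⟩))
      (fun k _ hk => by rw [Pi.single_eq_of_ne hk, mul_zero]),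
    Pi.single_eq_same, mul_one] at hcrit
  have hsq : ((-1 : ℝ) ^ n) ^ 2 = 1 := by rw [← pow_mul, mul_comm, pow_mul]; norm_num
  linear_combination (-1) ^ n * hcrit
    - dd^[n] (fun k => p k * dd^[n] (extendE N w) k) (m - n) * hsq

lemma solves_zero (n N : ℕ) (p : ℤ → ℝ) {f : ℤ → ℝ → ℝ} (hf0 : ∀ k, f k 0 = 0) :
    Solves n N p f 0 := by
  intro k _
  simp [extendE_zero, dd_iterate_zero, hf0, ← Pi.zero_def]

lemma exists_Jfun_le_sub_norm_sq (n N : ℕ) (p : ℤ → ℝ) {f : ℤ → ℝ → ℝ}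
    (hf : ∀ k, Continuous (f k)) {M α q : ℝ} (hα : 0 < α) (hq : 2 < q)
    (hFge : ∀ k ∈ Icc (1 : ℤ) N, ∀ u : ℝ, M < |u| → α * |u| ^ q ≤ Ffun f k u) :
    ∃ C, ∀ v : Fin N → ℝ, Jfun n N p (Ffun f) v ≤ C - ‖v‖ ^ 2 := by
  obtain ⟨A, hA⟩ := exists_sum_mul_sq_dd_iterate_le n N p (Icc (1 - (n : ℤ)) N)
  obtain ⟨C, hC0, hC⟩ := ((eventually_ge_atTop 0).and ((eventually_all_finset _).2 fun k hk =>
    eventually_mul_sq_sub_le (continuous_Ffun (hf k)) hα hq (hFge k hk) (|A| + 1))).exists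
  have hsub : Icc (1 : ℤ) N ⊆ Icc (1 - (n : ℤ)) N := Icc_subset_Icc (by omega) le_rfl
  refine ⟨#(Icc (1 - (n : ℤ)) N) * C, fun v => ?_⟩
  have hF : ∀ k ∈ Icc (1 - (n : ℤ)) N,
      (|A| + 1) * extendE N v k ^ 2 - C ≤ Ffun f k (extendE N v k) := by
    intro k _
    by_cases hk : k ∈ Icc (1 : ℤ) N
    · exact hC k hk _
    · simpa [extendE_eq_zero_of_notMem N v hk, Ffun_zero] using hC0
  have hFsum := sum_le_sum hF
  rw [sum_sub_distrib, ← mul_sum, sum_const, nsmul_eq_mul] at hFsum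
  rw [Jfun, sum_sub_distrib]
  have hnorm := mul_le_mul_of_nonneg_left (norm_sq_le_sum_sq_extendE N v hsub)
    (by positivity : (0 : ℝ) ≤ |A| + 1)
  nlinarith [hA v, le_abs_self A, sq_nonneg ‖v‖]

lemma exists_forall_Jfun_le (n N : ℕ) (p : ℤ → ℝ) {f : ℤ → ℝ → ℝ}
    (hf : ∀ k, Continuous (f k)) {M α q : ℝ} (hα : 0 < α) (hq : 2 < q)
    (hFge : ∀ k ∈ Icc (1 : ℤ) N, ∀ u : ℝ, M < |u| → α * |u| ^ q ≤ Ffun f k u) :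
    ∃ w, ∀ v, Jfun n N p (Ffun f) v ≤ Jfun n N p (Ffun f) w := by
  obtain ⟨C, hC⟩ := exists_Jfun_le_sub_norm_sq n N p hf hα hq hFge
  refine (continuous_Jfun n N p hf).exists_forall_ge' 0 ?_
  filter_upwards [((tendsto_pow_atTop two_ne_zero).comp
    tendsto_norm_cocompact_atTop).eventually_ge_atTop (C - Jfun n N p (Ffun f) 0)] with v hv
  linarith [hC v, show C - Jfun n N p (Ffun f) 0 ≤ ‖v‖ ^ 2 from hv]

lemma mul_sum_sq_sub_le_Jfun (n N : ℕ) (p : ℤ → ℝ) (F : ℤ → ℝ → ℝ) {lam pmin : ℝ}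
    (hpoin : ∀ v : Fin N → ℝ, lam * ∑ k ∈ Icc (1 : ℤ) N, extendE N v k ^ 2
        ≤ ∑ k ∈ Icc (1 - (n : ℤ)) N, dd^[n] (extendE N v) k ^ 2)
    (hpmin : 0 ≤ pmin) (hp : ∀ k ∈ Icc (1 - (n : ℤ)) N, pmin ≤ p k) (v : Fin N → ℝ) :
    lam * pmin / 2 * ∑ k ∈ Icc (1 : ℤ) N, extendE N v k ^ 2
        - ∑ k ∈ Icc (1 - (n : ℤ)) N, F k (extendE N v k) ≤ Jfun n N p F v := by
  rw [Jfun, sum_sub_distrib]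
  gcongr
  calc lam * pmin / 2 * ∑ k ∈ Icc (1 : ℤ) N, extendE N v k ^ 2
      ≤ pmin / 2 * ∑ k ∈ Icc (1 - (n : ℤ)) N, dd^[n] (extendE N v) k ^ 2 := by
        rw [mul_comm lam, mul_div_right_comm, mul_assoc]
        gcongr
        exact hpoin v
    _ ≤ ∑ k ∈ Icc (1 - (n : ℤ)) N, 1 / 2 * p k * dd^[n] (extendE N v) k ^ 2 := by
        rw [mul_sum]
        gcongr with k hk
        linarith [hp k hk]
lemma exists_Jfun_pos (n N : ℕ) (hN : 0 < N) (p : ℤ → ℝ) {f : ℤ → ℝ → ℝ}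
    (hf : Continuous (f 1)) (hf0 : f 1 0 = 0) {lam pmin L : ℝ}
    (hpoin : ∀ v : Fin N → ℝ, lam * ∑ k ∈ Icc (1 : ℤ) N, extendE N v k ^ 2
        ≤ ∑ k ∈ Icc (1 - (n : ℤ)) N, dd^[n] (extendE N v) k ^ 2)
    (hpmin : 0 ≤ pmin) (hp : ∀ k ∈ Icc (1 - (n : ℤ)) N, pmin ≤ p k)
    (hlim : Tendsto (fun u => f 1 u / u) (𝓝[≠] 0) (𝓝 L)) (hL : L < lam * pmin) :
    ∃ v, 0 < Jfun n N p (Ffun f) v := by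
  obtain ⟨t, ht0, ht⟩ := exists_Ffun_le_mul_sq hf hf0 hlim (left_lt_add_div_two.2 hL)
  refine ⟨Pi.single ⟨0, hN⟩ t, ?_⟩
  have hx : extendE N (Pi.single ⟨0, hN⟩ t) = Pi.single 1 t := by simp [extendE_single]
  have h1 : (1 : ℤ) ∈ Icc (1 : ℤ) N := mem_Icc.2 ⟨le_rfl, by omega⟩
  have hS : ∑ k ∈ Icc (1 : ℤ) N, (Pi.single 1 t : ℤ → ℝ) k ^ 2 = t ^ 2 := by
    rw [sum_eq_single_of_mem 1 h1 fun k _ hk => by simp [hk], Pi.single_eq_same]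
  have hF : ∑ k ∈ Icc (1 - (n : ℤ)) N, Ffun f k ((Pi.single 1 t : ℤ → ℝ) k) = Ffun f 1 t := by
    rw [sum_eq_single_of_mem 1 (Icc_subset_Icc (by omega) le_rfl h1)
      fun k _ hk => by simp [hk, Ffun_zero], Pi.single_eq_same]
  have hJ := mul_sum_sq_sub_le_Jfun n N p (Ffun f) hpoin hpmin hp (Pi.single ⟨0, hN⟩ t)
  rw [hx, hS, hF] at hJ
  nlinarith [pow_pos ht0 2]

theorem stmt18_general (n N : ℕ) (hN : 2 ≤ N) (p : ℤ → ℝ)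
    (f : ℤ → ℝ → ℝ) (hf : ∀ k, Continuous (f k)) (hf0 : ∀ k, f k 0 = 0)
    (lam : ℝ)
    (hpoin : ∀ v : Fin N → ℝ,
      lam * ∑ k ∈ Finset.Icc (1 : ℤ) (N : ℤ), (extendE N v k) ^ 2
        ≤ ∑ k ∈ Finset.Icc (1 - (n : ℤ)) (N : ℤ), (dd^[n] (extendE N v) k) ^ 2)
    (pmin : ℝ) (hpmin : 0 < pmin)
    (hp : ∀ k ∈ Finset.Icc (1 - (n : ℤ)) (N : ℤ), pmin ≤ p k)
    -- anti-coercivity hypothesis: `F(k,u) ≥ α|u|^q` for `|u| > M`, `q > 2`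
    (M α q : ℝ) (hα : 0 < α) (hq : 2 < q)
    (hFge : ∀ k ∈ Finset.Icc (1 : ℤ) (N : ℤ), ∀ u : ℝ, M < |u| →
      α * |u| ^ q ≤ Ffun f k u)
    -- `max_k lim_{u→0} f(k,u)/u ≤ c < λ · min_k p(k)`
    (L : ℤ → ℝ) (c : ℝ) (hc : c < lam * pmin)
    (hlim : ∀ k ∈ Finset.Icc (1 : ℤ) (N : ℤ),
      Filter.Tendsto (fun u : ℝ => f k u / u) (nhdsWithin 0 {(0 : ℝ)}ᶜ) (nhds (L k)))
    (hLc : ∀ k ∈ Finset.Icc (1 : ℤ) (N : ℤ), L k ≤ c) :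
    ∃ v w : Fin N → ℝ, v ≠ w ∧ Solves n N p f v ∧ Solves n N p f w := by
  have h1 : (1 : ℤ) ∈ Icc (1 : ℤ) N := mem_Icc.2 ⟨le_rfl, by omega⟩
  obtain ⟨w, hw⟩ := exists_forall_Jfun_le n N p hf hα hq hFge
  obtain ⟨v, hv⟩ := exists_Jfun_pos n N (by omega) p (hf 1) (hf0 1) hpoin hpmin.le hp
    (hlim 1 h1) ((hLc 1 h1).trans_lt hc)
  refine ⟨0, w, ?_, solves_zero n N p hf0,
    solves_of_isLocalMax n N p hf (Eventually.of_forall hw)⟩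
  rintro rfl
  linarith [hw v, Jfun_zero n N p f]

theorem stmt18 (n N : ℕ) (hn : 1 ≤ n) (hN : 2 ≤ N) (p : ℤ → ℝ)
    (f : ℤ → ℝ → ℝ) (hf : ∀ k, Continuous (f k)) (hf0 : ∀ k, f k 0 = 0)
    (lam : ℝ) (hlam : 0 < lam)
    (hpoin : ∀ v : Fin N → ℝ,
      lam * ∑ k ∈ Finset.Icc (1 : ℤ) (N : ℤ), (extendE N v k) ^ 2
        ≤ ∑ k ∈ Finset.Icc (1 - (n : ℤ)) (N : ℤ), (dd^[n] (extendE N v) k) ^ 2)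
    (pmin : ℝ) (hpmin : 0 < pmin)
    (hp : ∀ k ∈ Finset.Icc (1 - (n : ℤ)) (N : ℤ), pmin ≤ p k)
    -- anti-coercivity hypothesis: `F(k,u) ≥ α|u|^q` for `|u| > M`, `q > 2`
    (M α q : ℝ) (hM : 0 ≤ M) (hα : 0 < α) (hq : 2 < q)
    (hFge : ∀ k ∈ Finset.Icc (1 : ℤ) (N : ℤ), ∀ u : ℝ, M < |u| →
      α * |u| ^ q ≤ Ffun f k u)
    -- `max_k lim_{u→0} f(k,u)/u ≤ c < λ · min_k p(k)`
    (L : ℤ → ℝ) (c : ℝ) (hc : c < lam * pmin)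
    (hlim : ∀ k ∈ Finset.Icc (1 : ℤ) (N : ℤ),
      Filter.Tendsto (fun u : ℝ => f k u / u) (nhdsWithin 0 {(0 : ℝ)}ᶜ) (nhds (L k)))
    (hLc : ∀ k ∈ Finset.Icc (1 : ℤ) (N : ℤ), L k ≤ c) :
    ∃ v w : Fin N → ℝ, v ≠ w ∧ Solves n N p f v ∧ Solves n N p f w :=
  stmt18_general n N hN p f hf hf0 lam hpoin pmin hpmin hp M α q hα hq hFge L c hc hlim hLc
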